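/- Let K > 0, A ≠ 0, B ∈ ℝ, m ∈ ℝ, and let I be a nonempty open interval on which Ax + B > 0. Then the function f(x) = K·(Ax+B)^m (real power) satisfies Eq. (II) at every point of I if and only if m·(4m³ − 32m² + 79m − 60) = 0. -/

import Mathlib

/-!
The `k`-th derivative of `f(x) = K (Ax+B)^m` is `f(x) rᵏ m(m-1)⋯(m-k+1)` with `r = A/(Ax+B)`, so
every term of Eq. (II) is `f r⁴` times a polynomial in `m`; the difference of the two sides is
`f r⁴ m (4m³ - 32m² + 79m - 60) / 10`, and `f r⁴ ≠ 0` where `Ax+B > 0` (for a negative base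
Mathlib's real power `(Ax+B)^m` may vanish).
-/

/-- Eq. (II): `f'''' = f'·f'''/f + (11/10)·(f'')²/f − (12/5)·(f')²·f''/f² + (9/10)·(f')⁴/f³`. -/
def SatEqII (f : ℝ → ℝ) (x : ℝ) : Prop :=
  (deriv^[4] f x) =
    deriv f x * (deriv^[3] f x) / f x
      + (11/10) * (deriv^[2] f x)^2 / f x
      - (12/5) * (deriv f x)^2 * (deriv^[2] f x) / (f x)^2
      + (9/10) * (deriv f x)^4 / (f x)^3

theorem iter_deriv_comp_affine {𝕜 F : Type*} [NontriviallyNormedField 𝕜] [NormedAddCommGroup F]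
    [NormedSpace 𝕜 F] (f : 𝕜 → F) (c d : 𝕜) (k : ℕ) :
    deriv^[k] (fun x ↦ f (c * x + d)) = fun x ↦ c ^ k • deriv^[k] f (c * x + d) := by
  induction k with
  | zero => simp
  | succ k ih =>
    ext x
    rw [Function.iterate_succ_apply', ih, deriv_fun_const_smul_field,
      deriv_comp_mul_left c (fun z ↦ deriv^[k] f (z + d)), deriv_comp_add_const,
      ← Function.iterate_succ_apply' deriv, smul_smul, pow_succ]

theorem iter_deriv_const_mul_affine_rpow (K A B m : ℝ) (k : ℕ) {x : ℝ} (hx : A * x + B ≠ 0) :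
    deriv^[k] (fun y ↦ K * (A * y + B) ^ m) x
      = K * (A * x + B) ^ m * (A / (A * x + B)) ^ k * (descPochhammer ℝ k).eval m := by
  rw [iter_deriv_comp_affine (fun z ↦ K * z ^ m)]
  beta_reduce
  rw [smul_eq_mul, ← iteratedDeriv_eq_iterate,
    iteratedDeriv_const_mul_field, iteratedDeriv_eq_iterate, Real.iter_deriv_rpow_const,
    Real.rpow_sub_natCast hx, div_pow]
  field_simp

theorem satEqII_iff_of_iterate_deriv_eq {f : ℝ → ℝ} {x a r m : ℝ} (ha : a ≠ 0) (hr : r ≠ 0)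
    (hf : ∀ k, deriv^[k] f x = a * r ^ k * (descPochhammer ℝ k).eval m) :
    SatEqII f x ↔ m * (4 * m ^ 3 - 32 * m ^ 2 + 79 * m - 60) = 0 := by
  have hf0 : f x = a := by simpa using hf 0
  have hf1 : deriv f x = a * r * m := by simpa using hf 1
  rw [SatEqII, ← sub_eq_zero]
  simp only [hf, hf0, hf1, descPochhammer_eval_eq_prod_range, Finset.prod_range_succ,
    Finset.prod_range_zero, Nat.cast_ofNat, Nat.cast_one, Nat.cast_zero]
  have hc : a * r ^ 4 / 10 ≠ 0 := by positivity
  convert mul_eq_zero_iff_left hc using 2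
  field_simp
  ring

theorem statement8_general
    (K A B m : ℝ) (hK : 0 < K) (hA : A ≠ 0)
    (I : Set ℝ)
    (hIne : I.Nonempty) (hIpos : ∀ x ∈ I, 0 < A * x + B) :
    (∀ x ∈ I, SatEqII (fun y => K * (A * y + B) ^ m) x) ↔
      m * (4 * m^3 - 32 * m^2 + 79 * m - 60) = 0 := by
  have key : ∀ x ∈ I, SatEqII (fun y => K * (A * y + B) ^ m) x ↔
      m * (4 * m^3 - 32 * m^2 + 79 * m - 60) = 0 := by
    intro x hx
    have ht := hIpos x hx
    exact satEqII_iff_of_iterate_deriv_eq (by positivity) (div_ne_zero hA ht.ne')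
      fun k ↦ iter_deriv_const_mul_affine_rpow K A B m k ht.ne'
  obtain ⟨x₀, hx₀⟩ := hIne
  exact ⟨fun h ↦ (key x₀ hx₀).1 (h x₀ hx₀), fun h x hx ↦ (key x hx).2 h⟩

/-- `f(x) = K·(Ax+B)^m` satisfies Eq. (II) on a nonempty open interval
where `Ax+B > 0` iff `m(4m³ − 32m² + 79m − 60) = 0`. -/
theorem statement8
    (K A B m : ℝ) (hK : 0 < K) (hA : A ≠ 0)
    (I : Set ℝ) (hIopen : IsOpen I) (hIinterval : I.OrdConnected)
    (hIne : I.Nonempty) (hIpos : ∀ x ∈ I, 0 < A * x + B) :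
    (∀ x ∈ I, SatEqII (fun y => K * (A * y + B) ^ m) x) ↔
      m * (4 * m^3 - 32 * m^2 + 79 * m - 60) = 0 :=
  statement8_general K A B m hK hA I hIne hIpos
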